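/- Second-order remainder bound via Cauchy–Schwarz: with h_θ(x) = G(θ|1,x), h_{0,θ}(x) = G₀(θ|1,x), and θ₀ the true quantile (so E₀[G₀(θ₀|1,X)] = q), one has |E₀[D_{η,θ₀}]| ≤ C · ‖h_{θ₀} - h_{0,θ₀}‖ · ‖e - e₀‖, where ‖·‖ denotes the L²(P₀) norm and C = 1/(f(θ₀) · inf_x e(x)), provided inf_x e(x) > 0 and inf_x e₀ is bounded. -/

import Mathlib

open MeasureTheory

/-!
Conditioning on the finitely many values of `X`, and using `E₀[M·1{Y ≤ θ₀} | X] = e₀ G₀`,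
the mean of the augmented inverse-probability-weighted score minus `q` is
`∑ₓ P(X = x)·((e₀/e)(G₀ - G) + G - G₀)(x) + F₀(θ₀) - q = ∑ₓ P(X = x)·(G - G₀)(e - e₀)/e (x)`,
a product of the two nuisance errors. The bound `e ≥ ε` and Cauchy–Schwarz in `L²(P_X)`
finish the estimate.
-/

theorem indicator_div_mul_indicator_sub {Ω : Type*} {B C : Set Ω} (f g : Ω → ℝ) (ω : Ω) :
    B.indicator (fun _ => (1 : ℝ)) ω / f ω * (C.indicator (fun _ => (1 : ℝ)) ω - g ω)
      = (C ∩ B).indicator (fun ω => 1 / f ω) ω - B.indicator (fun ω => g ω / f ω) ω := by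
  by_cases hB : ω ∈ B <;> by_cases hC : ω ∈ C <;> simp [hB, hC] <;> ring

section FiniteValued

variable {Ω α : Type*} [MeasurableSpace Ω] [Fintype α] [MeasurableSpace α]
  [MeasurableSingletonClass α] {μ : Measure Ω} {X : Ω → α}

theorem integrable_comp_of_fintype [IsFiniteMeasure μ] (hX : Measurable X) (φ : α → ℝ) :
    Integrable (fun ω => φ (X ω)) μ :=
  Integrable.of_finite.comp_measurable hX

theorem setIntegral_comp_eq_sum [IsFiniteMeasure μ] (hX : Measurable X) (φ : α → ℝ) (S : Set Ω) :
    ∫ ω in S, φ (X ω) ∂μ = ∑ x, μ.real (S ∩ {ω | X ω = x}) * φ x := by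
  rw [← integral_map hX.aemeasurable Measurable.of_discrete.aestronglyMeasurable,
    integral_fintype Integrable.of_finite]
  refine Finset.sum_congr rfl fun x _ => ?_
  rw [map_measureReal_apply hX (measurableSet_singleton x),
    measureReal_restrict_apply (hX (measurableSet_singleton x)), Set.inter_comm, smul_eq_mul]
  rfl

theorem integral_aipw_eq_sum [IsProbabilityMeasure μ] (hX : Measurable X) {B C : Set Ω}
    (hB : MeasurableSet B) (hC : MeasurableSet C) (e G : α → ℝ) (q : ℝ) :
    ∫ ω, B.indicator (fun _ => (1 : ℝ)) ω / e (X ω)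
        * (C.indicator (fun _ => (1 : ℝ)) ω - G (X ω)) + G (X ω) - q ∂μ
      = ∑ x, ((μ.real (C ∩ B ∩ {ω | X ω = x}) - μ.real (B ∩ {ω | X ω = x}) * G x) / e x
          + μ.real {ω | X ω = x} * G x) - q := by
  have hint : ∀ φ : α → ℝ, Integrable (fun ω => φ (X ω)) μ := integrable_comp_of_fintype hX
  have h₁ := (hint fun x => 1 / e x).indicator (hC.inter hB)
  have h₂ := (hint fun x => G x / e x).indicator hB
  simp_rw [indicator_div_mul_indicator_sub (fun ω => e (X ω)) (fun ω => G (X ω))]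
  rw [integral_sub (by exact (h₁.sub h₂).add (hint G)) (integrable_const q),
    integral_add (by exact h₁.sub h₂) (hint G), integral_sub h₁ h₂,
    integral_indicator (hC.inter hB), integral_indicator hB, integral_const,
    ← setIntegral_univ (f := fun ω => G (X ω)), setIntegral_comp_eq_sum hX,
    setIntegral_comp_eq_sum hX (fun x => 1 / e x), setIntegral_comp_eq_sum hX (fun x => G x / e x)]
  simp only [probReal_univ, smul_eq_mul, one_mul, Set.univ_inter, ← Finset.sum_sub_distrib,
    ← Finset.sum_add_distrib]
  congr 1
  exact Finset.sum_congr rfl fun x _ => by ring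

end FiniteValued

theorem measureReal_inter_div_mul_cancel {Ω : Type*} [MeasurableSpace Ω] (μ : Measure Ω)
    [IsFiniteMeasure μ] (s t : Set Ω) : μ.real (s ∩ t) / μ.real t * μ.real t = μ.real (s ∩ t) :=
  div_mul_cancel_of_imp fun h => measureReal_mono_null Set.inter_subset_right h

theorem aipw_remainder_eq_sum_mul_mul {ι : Type*} (s : Finset ι) (p pm pym e e₀ G G₀ : ι → ℝ)
    (he : ∀ i, e i ≠ 0) (hpm : ∀ i, pm i = e₀ i * p i) (hpym : ∀ i, pym i = G₀ i * pm i) :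
    ∑ i ∈ s, ((pym i - pm i * G i) / e i + p i * G i) - ∑ i ∈ s, G₀ i * p i
      = ∑ i ∈ s, (G i - G₀ i) * (e i - e₀ i) / e i * p i := by
  rw [← Finset.sum_sub_distrib]
  refine Finset.sum_congr rfl fun i _ => ?_
  rw [hpym, hpm]
  field_simp [he i]
  ring

theorem abs_sum_mul_div_le {ι : Type*} (s : Finset ι) (a b c w : ι → ℝ) {ε : ℝ} (hε : 0 < ε)
    (hc : ∀ i, ε ≤ c i) (hw : ∀ i, 0 ≤ w i) :
    |∑ i ∈ s, a i * b i / c i * w i|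
      ≤ 1 / ε * √(∑ i ∈ s, a i ^ 2 * w i) * √(∑ i ∈ s, b i ^ 2 * w i) := by
  have hc0 : ∀ i, 0 < c i := fun i => hε.trans_le (hc i)
  calc |∑ i ∈ s, a i * b i / c i * w i|
      ≤ ∑ i ∈ s, 1 / ε * ((|a i| * √(w i)) * (|b i| * √(w i))) := by
        refine (Finset.abs_sum_le_sum_abs _ _).trans (Finset.sum_le_sum fun i _ => ?_)
        have habw : 0 ≤ |a i| * |b i| * w i := by have := hw i; positivity
        calc |a i * b i / c i * w i| = |a i| * |b i| * w i * (1 / c i) := by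
              rw [abs_mul, abs_div, abs_mul, abs_of_nonneg (hw i), abs_of_pos (hc0 i)]; ring
          _ ≤ |a i| * |b i| * w i * (1 / ε) :=
              mul_le_mul_of_nonneg_left (one_div_le_one_div_of_le hε (hc i)) habw
          _ = 1 / ε * (|a i| * |b i| * (√(w i) * √(w i))) := by
              rw [Real.mul_self_sqrt (hw i)]; ring
          _ = 1 / ε * ((|a i| * √(w i)) * (|b i| * √(w i))) := by ring
    _ = 1 / ε * ∑ i ∈ s, (|a i| * √(w i)) * (|b i| * √(w i)) := by rw [Finset.mul_sum]
    _ ≤ 1 / ε * (√(∑ i ∈ s, (|a i| * √(w i)) ^ 2) * √(∑ i ∈ s, (|b i| * √(w i)) ^ 2)) := by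
        gcongr
        exact Real.sum_mul_le_sqrt_mul_sqrt _ _ _
    _ = 1 / ε * √(∑ i ∈ s, a i ^ 2 * w i) * √(∑ i ∈ s, b i ^ 2 * w i) := by
        simp only [mul_pow, sq_abs, Real.sq_sqrt (hw _), mul_assoc]

theorem stmt3_general {Ω α : Type*} [MeasurableSpace Ω] [Fintype α] [MeasurableSpace α]
    [MeasurableSingletonClass α]
    (P : Measure Ω) [IsProbabilityMeasure P]
    (X : Ω → α) (M : Ω → ℕ) (Y : Ω → ℝ)
    (hX : Measurable X) (hM : Measurable M) (hY : Measurable Y)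
    (θ₀ q fθ : ℝ) (hf : 0 < fθ)
    (e : α → ℝ) (G : α → ℝ)
    -- a positive lower bound for e (inf_x e(x) > 0):
    (ε : ℝ) (hε : 0 < ε) (heinf : ∀ x, ε ≤ e x)
    (e₀ G₀ : α → ℝ)
    (he₀ : ∀ x, e₀ x = (P ({ω | M ω = 1} ∩ {ω | X ω = x})).toReal
                        / (P {ω | X ω = x}).toReal)
    (hG₀ : ∀ x, G₀ x = (P ({ω | Y ω ≤ θ₀} ∩ {ω | M ω = 1} ∩ {ω | X ω = x})).toReal
                        / (P ({ω | M ω = 1} ∩ {ω | X ω = x})).toReal)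
    -- θ₀ is the true q-th quantile:  F₀(θ₀) = E₀[G₀(θ₀|1,X)] = q :
    (hθ₀ : ∑ x : α, G₀ x * (P {ω | X ω = x}).toReal = q) :
    |∫ ω, -(1 / fθ)
        * ((Set.indicator {ω' | M ω' = 1} (fun _ => (1 : ℝ)) ω / e (X ω))
              * (Set.indicator {ω' | Y ω' ≤ θ₀} (fun _ => (1 : ℝ)) ω - G (X ω))
            + G (X ω) - q) ∂P|
      ≤ (1 / (fθ * ε))
          * Real.sqrt (∑ x : α, (G x - G₀ x) ^ 2 * (P {ω | X ω = x}).toReal)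
          * Real.sqrt (∑ x : α, (e x - e₀ x) ^ 2 * (P {ω | X ω = x}).toReal) := by
  simp only [← measureReal_def] at he₀ hG₀ hθ₀ ⊢
  have hB : MeasurableSet {ω | M ω = 1} := hM (measurableSet_singleton 1)
  have hC : MeasurableSet {ω | Y ω ≤ θ₀} := measurableSet_le hY measurable_const
  have hremainder := aipw_remainder_eq_sum_mul_mul Finset.univ _ _
    (fun x => P.real ({ω | Y ω ≤ θ₀} ∩ {ω | M ω = 1} ∩ {ω | X ω = x})) e e₀ G G₀
    (fun x => (hε.trans_le (heinf x)).ne')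
    (fun x => by rw [he₀ x, measureReal_inter_div_mul_cancel])
    (fun x => by rw [hG₀ x, Set.inter_assoc, measureReal_inter_div_mul_cancel])
  rw [integral_const_mul, integral_aipw_eq_sum hX hB hC, ← hθ₀, hremainder, abs_mul, abs_neg,
    abs_of_pos (one_div_pos.2 hf)]
  calc 1 / fθ * |∑ x, (G x - G₀ x) * (e x - e₀ x) / e x * P.real {ω | X ω = x}|
      ≤ 1 / fθ * (1 / ε * √(∑ x, (G x - G₀ x) ^ 2 * P.real {ω | X ω = x})
          * √(∑ x, (e x - e₀ x) ^ 2 * P.real {ω | X ω = x})) := by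
        gcongr
        exact abs_sum_mul_div_le _ _ _ _ _ hε heinf fun x => measureReal_nonneg
    _ = _ := by ring

/-- Second-order remainder bound via Cauchy–Schwarz:
`|E₀[D_{η,θ₀}]| ≤ C·‖h_{θ₀} - h_{0,θ₀}‖·‖e - e₀‖` with
`C = 1/(f(θ₀)·inf_x e(x))`, the norms being `L²(P₀)` norms over the
distribution of `X`. -/
theorem stmt3 {Ω α : Type*} [MeasurableSpace Ω] [Fintype α] [MeasurableSpace α]
    [MeasurableSingletonClass α]
    (P : Measure Ω) [IsProbabilityMeasure P]
    (X : Ω → α) (M : Ω → ℕ) (Y : Ω → ℝ)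
    (hX : Measurable X) (hM : Measurable M) (hY : Measurable Y)
    (θ₀ q fθ : ℝ) (hf : 0 < fθ)
    (e : α → ℝ) (G : α → ℝ)
    (he : ∀ x, e x ∈ Set.Ioc (0 : ℝ) 1) (hG : ∀ x, G x ∈ Set.Icc (0 : ℝ) 1)
    -- a positive lower bound for e (inf_x e(x) > 0):
    (ε : ℝ) (hε : 0 < ε) (heinf : ∀ x, ε ≤ e x)
    (e₀ G₀ : α → ℝ)
    (he₀ : ∀ x, e₀ x = (P ({ω | M ω = 1} ∩ {ω | X ω = x})).toReal
                        / (P {ω | X ω = x}).toReal)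
    (hG₀ : ∀ x, G₀ x = (P ({ω | Y ω ≤ θ₀} ∩ {ω | M ω = 1} ∩ {ω | X ω = x})).toReal
                        / (P ({ω | M ω = 1} ∩ {ω | X ω = x})).toReal)
    -- conditional independence  Y ⟂ M ∣ X  (for the event {Y ≤ θ₀}):
    (hCI : ∀ x : α,
      P ({ω | Y ω ≤ θ₀} ∩ {ω | M ω = 1} ∩ {ω | X ω = x}) * P {ω | X ω = x}
        = P ({ω | Y ω ≤ θ₀} ∩ {ω | X ω = x}) * P ({ω | M ω = 1} ∩ {ω | X ω = x}))
    -- positivity: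
    (hpos : ∀ x : α, P {ω | X ω = x} ≠ 0 → P ({ω | M ω = 1} ∩ {ω | X ω = x}) ≠ 0)
    -- θ₀ is the true q-th quantile:  F₀(θ₀) = E₀[G₀(θ₀|1,X)] = q :
    (hθ₀ : ∑ x : α, G₀ x * (P {ω | X ω = x}).toReal = q) :
    |∫ ω, -(1 / fθ)
        * ((Set.indicator {ω' | M ω' = 1} (fun _ => (1 : ℝ)) ω / e (X ω))
              * (Set.indicator {ω' | Y ω' ≤ θ₀} (fun _ => (1 : ℝ)) ω - G (X ω))
            + G (X ω) - q) ∂P|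
      ≤ (1 / (fθ * ε))
          * Real.sqrt (∑ x : α, (G x - G₀ x) ^ 2 * (P {ω | X ω = x}).toReal)
          * Real.sqrt (∑ x : α, (e x - e₀ x) ^ 2 * (P {ω | X ω = x}).toReal) :=
  stmt3_general P X M Y hX hM hY θ₀ q fθ hf e G ε hε heinf e₀ G₀ he₀ hG₀ hθ₀
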